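/- arXiv:2402.03220 — 5 statements merged into one kernel-verified Lean document; each statement's English description precedes it below -/
import Mathlib

section
/- Let d ≥ 1, let z be a standard Gaussian vector on ℝ^d, let v ∈ ℝ^d with v ≠ 0, and let R_v denote the reflection along v, i.e., R_v z = z − 2⟨v, z⟩v/‖v‖². Suppose O : ℝ^d → ℝ^d is a linear orthogonal map with O v = v (so O restricts to an orthogonal transformation of the hyperplane {v}⊥), and suppose f : ℝ^d → ℝ is measurable and satisfies f(O(R_v z)) = f(z) for all z ∈ ℝ^d. Then for every real-analytic function F : ℝ → ℝ such that z ↦ F(f(z))⟨v, z⟩ is integrable with respect to the standard Gaussian measure, E[F(f(z))⟨v, z⟩] = 0. -/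
/-! The map `T = O ∘ R_v` is a linear isometry, so it preserves the standard Gaussian measure.
It fixes `f` and flips the sign of `⟨v, ·⟩`, hence the integrand is odd under `T` and its
integral equals its own negative. -/

open MeasureTheory ProbabilityTheory

/-- The standard Gaussian measure on `ℝ^d` (i.i.d. `N(0,1)` coordinates). -/
noncomputable def stdGaussian (d : ℕ) : Measure (EuclideanSpace ℝ (Fin d)) :=
  (Measure.pi fun _ => gaussianReal 0 1).map (MeasurableEquiv.toLp 2 (Fin d → ℝ))

/-- The reflection along the direction `v`: `R_v z = z - 2⟨v,z⟩v/‖v‖²`. -/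
noncomputable def reflAlong {d : ℕ} (v : EuclideanSpace ℝ (Fin d)) :
    EuclideanSpace ℝ (Fin d) → EuclideanSpace ℝ (Fin d) :=
  fun z => z - (2 * (inner ℝ v z : ℝ) / ‖v‖ ^ 2) • v

theorem stdGaussian_eq_stdGaussian_euclideanSpace (d : ℕ) :
    stdGaussian d = ProbabilityTheory.stdGaussian (EuclideanSpace ℝ (Fin d)) :=
  map_pi_eq_stdGaussian

theorem measurePreserving_stdGaussian {E : Type*} [NormedAddCommGroup E] [InnerProductSpace ℝ E]
    [FiniteDimensional ℝ E] [MeasurableSpace E] [BorelSpace E] (T : E ≃ₗᵢ[ℝ] E) :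
    MeasurePreserving T (ProbabilityTheory.stdGaussian E) (ProbabilityTheory.stdGaussian E) :=
  ⟨T.continuous.measurable, stdGaussian_map T⟩

theorem integral_eq_zero_of_comp_eq_neg {α : Type*} [MeasurableSpace α] {μ : Measure α}
    {T : α → α} (hT : MeasurePreserving T μ μ) (hTe : MeasurableEmbedding T) {g : α → ℝ}
    (hg : ∀ x, g (T x) = -g x) : ∫ x, g x ∂μ = 0 := by
  have h : ∫ x, g x ∂μ = -∫ x, g x ∂μ := calc
    ∫ x, g x ∂μ = ∫ x, g (T x) ∂μ := (hT.integral_comp hTe g).symm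
    _ = -∫ x, g x ∂μ := by simp only [hg, integral_neg]
  linarith

theorem reflAlong_eq_reflection {d : ℕ} (v : EuclideanSpace ℝ (Fin d)) :
    reflAlong v = (ℝ ∙ v)ᗮ.reflection := by
  ext1 z
  rw [Submodule.reflection_orthogonal_apply, Submodule.reflection_singleton_apply, reflAlong]
  simp only [RCLike.ofReal_real_eq_id, id_eq]
  module

theorem inner_reflection_orthogonal_singleton {E : Type*} [NormedAddCommGroup E]
    [InnerProductSpace ℝ E] (v z : E) :
    inner ℝ v ((ℝ ∙ v)ᗮ.reflection z) = -inner ℝ v z := by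
  rw [← (ℝ ∙ v)ᗮ.reflection.inner_map_map, Submodule.reflection_reflection,
    Submodule.reflection_orthogonalComplement_singleton_eq_neg, inner_neg_left]

theorem orthogonally_even_symmetric_direction_is_hard_general
    (d : ℕ)
    (v : EuclideanSpace ℝ (Fin d))
    (O : EuclideanSpace ℝ (Fin d) ≃ₗᵢ[ℝ] EuclideanSpace ℝ (Fin d))
    (hOv : O v = v)
    (f : EuclideanSpace ℝ (Fin d) → ℝ)
    (hsym : ∀ z, f (O (reflAlong v z)) = f z) :
    ∀ F : ℝ → ℝ, (∀ x, AnalyticAt ℝ F x) →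
      Integrable (fun z => F (f z) * (inner ℝ v z : ℝ)) (stdGaussian d) →
      ∫ z, F (f z) * (inner ℝ v z : ℝ) ∂(stdGaussian d) = 0 := by
  intro F _ _
  set T := (ℝ ∙ v)ᗮ.reflection.trans O
  have hT : ∀ z, T z = O (reflAlong v z) := fun z => by simp [T, reflAlong_eq_reflection]
  have hTv : ∀ z, inner ℝ v (T z) = -inner ℝ v z := fun z => by
    nth_rw 1 [← hOv]
    rw [LinearIsometryEquiv.trans_apply, O.inner_map_map, inner_reflection_orthogonal_singleton]
  rw [stdGaussian_eq_stdGaussian_euclideanSpace]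
  refine integral_eq_zero_of_comp_eq_neg (measurePreserving_stdGaussian T)
    T.toHomeomorph.measurableEmbedding fun z => ?_
  rw [hT, hsym, ← hT, hTv, mul_neg]

/-- Orthogonally-even-symmetric directions are hard: if `f ∘ (O ∘ R_v) = f` for some
orthogonal `O` fixing `v`, then no analytic transformation of the output of `f`
correlates linearly with `v` under the standard Gaussian. -/
theorem orthogonally_even_symmetric_direction_is_hard
    (d : ℕ) (hd : 1 ≤ d)
    (v : EuclideanSpace ℝ (Fin d)) (hv : v ≠ 0)
    (O : EuclideanSpace ℝ (Fin d) ≃ₗᵢ[ℝ] EuclideanSpace ℝ (Fin d))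
    (hOv : O v = v)
    (f : EuclideanSpace ℝ (Fin d) → ℝ) (hf : Measurable f)
    (hsym : ∀ z, f (O (reflAlong v z)) = f z) :
    ∀ F : ℝ → ℝ, (∀ x, AnalyticAt ℝ F x) →
      Integrable (fun z => F (f z) * (inner ℝ v z : ℝ)) (stdGaussian d) →
      ∫ z, F (f z) * (inner ℝ v z : ℝ) ∂(stdGaussian d) = 0 :=
  orthogonally_even_symmetric_direction_is_hard_general d v O hOv f hsym
end

section
/- For every natural number k, letting He_{2k+1} denote the (2k+1)-st probabilists' Hermite polynomial and z a standard normal random variable, E[(He_{2k+1}(z))³ · z] ≠ 0. -/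
open MeasureTheory ProbabilityTheory

/-- The `n`-th probabilists' Hermite polynomial as a function `ℝ → ℝ`. -/
noncomputable def He (n : ℕ) (z : ℝ) : ℝ := Polynomial.aeval z (Polynomial.hermite n)

/-!
Gaussian integration by parts, `E[z p(z)] = E[p'(z)]`, turns `E[He_n(z)³ z]` into
`3n E[He_{n-1} He_n He_n]`. Applied once more, together with `He_{a+1} = z He_a - He_a'`, it gives
the recursion `T(a+1,b,c) = b T(a,b-1,c) + c T(a,b,c-1)` for the triple products
`T(a,b,c) = E[He_a He_b He_c]`, starting from `T(0,0,0) = 1`. Hence all `T(a,b,c)` are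
nonnegative, and `T(y+z+1, z+x+1, x+y) ≥ (z+x+1) T(y+z, z+x, x+y)`; with the cyclic symmetry of
`T` this gives `T(y+z, z+x, x+y) > 0` for all `x, y, z`. The triple `(2k, 2k+1, 2k+1)` is of this
form with `(x, y, z) = (k+1, k, k)`.
-/

open Polynomial
open scoped NNReal

namespace ProbabilityTheory

variable {R : Type*} [CommSemiring R] [Algebra R ℝ] {μ : ℝ} {v : ℝ≥0}

lemma integrable_pow_gaussianReal (n : ℕ) : Integrable (fun x ↦ x ^ n) (gaussianReal μ v) := by
  refine ((memLp_id_gaussianReal n).integrable_norm_pow').mono' (by fun_prop) ?_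
  exact ae_of_all _ fun x ↦ by simp [norm_pow]

lemma integrable_aeval_gaussianReal (p : R[X]) :
    Integrable (fun x ↦ aeval x p) (gaussianReal μ v) := by
  induction p using Polynomial.induction_on' with
  | add p q hp hq => simp only [map_add]; exact hp.add hq
  | monomial n a =>
    simpa [aeval_monomial] using (integrable_pow_gaussianReal n).const_mul (algebraMap R ℝ a)

lemma integrable_gaussianPDFReal_mul_aeval (p : R[X]) :
    Integrable (fun x ↦ gaussianPDFReal μ v x * aeval x p) := by
  rcases eq_or_ne v 0 with rfl | hv
  · simp
  have h := integrable_aeval_gaussianReal (μ := μ) (v := v) p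
  rw [gaussianReal_of_var_ne_zero μ hv,
    integrable_withDensity_iff_integrable_smul' (measurable_gaussianPDF μ v)
      (ae_of_all _ fun _ ↦ gaussianPDF_lt_top)] at h
  simpa [toReal_gaussianPDF] using h

lemma hasDerivAt_gaussianPDFReal (μ : ℝ) (v : ℝ≥0) (x : ℝ) :
    HasDerivAt (gaussianPDFReal μ v) (-((x - μ) / v) * gaussianPDFReal μ v x) x := by
  have h : HasDerivAt (fun y ↦ -(y - μ) ^ 2 / (2 * v)) (-((x - μ) / v)) x :=
    ((((hasDerivAt_id' x).sub_const μ).pow 2).neg.div_const _).congr_deriv (by push_cast; ring)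
  rw [gaussianPDFReal_def]
  exact (h.exp.const_mul _).congr_deriv (by ring)

lemma integral_sub_mul_aeval_gaussianReal (p : R[X]) :
    ∫ x, (x - μ) * aeval x p ∂gaussianReal μ v =
      v * ∫ x, aeval x (derivative p) ∂gaussianReal μ v := by
  rcases eq_or_ne v 0 with rfl | hv
  · simp [gaussianReal_zero_var]
  have hderiv (x : ℝ) : HasDerivAt (fun y ↦ gaussianPDFReal μ v y * aeval y p)
      (gaussianPDFReal μ v x * aeval x (derivative p)
        - (v : ℝ)⁻¹ * (gaussianPDFReal μ v x * ((x - μ) * aeval x p))) x :=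
    ((hasDerivAt_gaussianPDFReal μ v x).mul (p.hasDerivAt_aeval x)).congr_deriv (by ring)
  have hint₁ := integrable_gaussianPDFReal_mul_aeval (μ := μ) (v := v) (derivative p)
  have hint₂ := integrable_gaussianPDFReal_mul_aeval (μ := μ) (v := v)
    ((X - C μ) * p.map (algebraMap R ℝ))
  simp only [map_mul, map_sub, aeval_X, aeval_C, aeval_map_algebraMap, Algebra.algebraMap_self,
    RingHom.id_apply] at hint₂
  have h := integral_eq_zero_of_hasDerivAt_of_integrable hderiv
    (hint₁.sub (hint₂.const_mul _)) (integrable_gaussianPDFReal_mul_aeval p)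
  rw [integral_sub hint₁ (hint₂.const_mul _), integral_const_mul, sub_eq_zero] at h
  simp only [integral_gaussianReal_eq_integral_smul hv, smul_eq_mul, h]
  exact (mul_inv_cancel_left₀ (NNReal.coe_ne_zero.mpr hv) _).symm

variable (μ v) in
noncomputable def gaussianRealPolyMean : R[X] →+ ℝ where
  toFun p := ∫ x, aeval x p ∂gaussianReal μ v
  map_zero' := by simp
  map_add' p q := by
    simp only [map_add]
    exact integral_add (integrable_aeval_gaussianReal p) (integrable_aeval_gaussianReal q)

lemma gaussianRealPolyMean_apply (p : R[X]) :
    gaussianRealPolyMean μ v p = ∫ x, aeval x p ∂gaussianReal μ v := rfl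

lemma gaussianRealPolyMean_natCast_mul (n : ℕ) (p : R[X]) :
    gaussianRealPolyMean μ v ((n : R[X]) * p) = n * gaussianRealPolyMean μ v p := by
  rw [← nsmul_eq_mul, map_nsmul, nsmul_eq_mul]

lemma gaussianRealPolyMean_X_mul (p : R[X]) :
    gaussianRealPolyMean μ v (X * p) =
      μ * gaussianRealPolyMean μ v p + v * gaussianRealPolyMean μ v (derivative p) := by
  have hXp := integrable_aeval_gaussianReal (μ := μ) (v := v) (X * p)
  have hp := integrable_aeval_gaussianReal (μ := μ) (v := v) p
  have h := integral_sub_mul_aeval_gaussianReal (μ := μ) (v := v) p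
  simp only [map_mul, aeval_X] at hXp
  simp only [sub_mul, integral_sub hXp (hp.const_mul μ), integral_const_mul] at h
  simp only [gaussianRealPolyMean_apply, map_mul, aeval_X, ← h]
  ring

end ProbabilityTheory

namespace Polynomial

theorem derivative_hermite (n : ℕ) : derivative (hermite n) = n * hermite (n - 1) := by
  induction n with
  | zero => simp
  | succ n ih =>
    rw [hermite_succ, derivative_sub, derivative_mul, derivative_X, one_mul, ih,
      Nat.add_sub_cancel]
    cases n with
    | zero => simp
    | succ n =>
      rw [Nat.add_sub_cancel, derivative_mul, derivative_natCast, zero_mul, zero_add,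
        hermite_succ n]
      push_cast
      ring

end Polynomial

noncomputable def hermiteTriple (a b c : ℕ) : ℝ :=
  gaussianRealPolyMean 0 1 (hermite a * hermite b * hermite c)

lemma hermiteTriple_rotate (a b c : ℕ) : hermiteTriple a b c = hermiteTriple b c a := by
  rw [hermiteTriple, hermiteTriple, mul_rotate]

lemma hermiteTriple_zero : hermiteTriple 0 0 0 = 1 := by
  simp [hermiteTriple, gaussianRealPolyMean_apply]

lemma hermiteTriple_succ (a b c : ℕ) :
    hermiteTriple (a + 1) b c =
      b * hermiteTriple a (b - 1) c + c * hermiteTriple a b (c - 1) := by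
  set q := hermite a * hermite b * hermite c
  have h : hermite (a + 1) * hermite b * hermite c = X * q - derivative q
      + ((b : ℤ[X]) * (hermite a * hermite (b - 1) * hermite c)
        + (c : ℤ[X]) * (hermite a * hermite b * hermite (c - 1))) := by
    simp only [q, hermite_succ a, derivative_mul, derivative_hermite b, derivative_hermite c]
    ring
  rw [hermiteTriple, h, map_add, map_add, map_sub, gaussianRealPolyMean_X_mul,
    gaussianRealPolyMean_natCast_mul, gaussianRealPolyMean_natCast_mul, NNReal.coe_one,
    zero_mul, zero_add, one_mul, sub_self, zero_add]
  rfl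

theorem hermiteTriple_nonneg : ∀ a b c : ℕ, 0 ≤ hermiteTriple a b c
  | 0, 0, 0 => hermiteTriple_zero.symm ▸ zero_le_one
  | a + 1, b, c => by
    have := hermiteTriple_nonneg a (b - 1) c
    have := hermiteTriple_nonneg a b (c - 1)
    rw [hermiteTriple_succ]
    positivity
  | 0, b + 1, c => by
    have := hermiteTriple_nonneg b (c - 1) 0
    rw [hermiteTriple_rotate, hermiteTriple_succ, Nat.cast_zero, zero_mul, add_zero]
    positivity
  | 0, 0, c + 1 => by
    rw [← hermiteTriple_rotate, hermiteTriple_succ]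
    simp
termination_by a b c => a + b + c

lemma hermiteTriple_pos_succ {x y z : ℕ} (h : 0 < hermiteTriple (y + z) (z + x) (x + y)) :
    0 < hermiteTriple (y + (z + 1)) (z + 1 + x) (x + y) := by
  have := hermiteTriple_nonneg (y + z) (z + x + 1) (x + y - 1)
  rw [← add_assoc, add_right_comm z, hermiteTriple_succ, Nat.add_sub_cancel]
  positivity

theorem hermiteTriple_pos (x y z : ℕ) : 0 < hermiteTriple (y + z) (z + x) (x + y) := by
  have pos_of_base {x y : ℕ} (h : 0 < hermiteTriple (y + 0) (0 + x) (x + y)) (z : ℕ) :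
      0 < hermiteTriple (y + z) (z + x) (x + y) := by
    induction z with
    | zero => exact h
    | succ z ih => exact hermiteTriple_pos_succ ih
  have h₀ : 0 < hermiteTriple (0 + 0) (0 + 0) (0 + 0) := by
    rw [add_zero, hermiteTriple_zero]
    exact one_pos
  have h₁ := pos_of_base h₀ x
  have h₂ := pos_of_base (by rw [hermiteTriple_rotate, hermiteTriple_rotate]; exact h₁) y
  exact pos_of_base (by rw [hermiteTriple_rotate, hermiteTriple_rotate]; exact h₂) z

theorem integral_He_pow_three_mul (n : ℕ) :
    ∫ z, He n z ^ 3 * z ∂gaussianReal 0 1 = 3 * n * hermiteTriple (n - 1) n n := by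
  have h : derivative (hermite n ^ 3) =
      ((3 * n : ℕ) : ℤ[X]) * (hermite (n - 1) * hermite n * hermite n) := by
    rw [derivative_pow, derivative_hermite, C_eq_natCast]
    push_cast
    ring
  calc ∫ z, He n z ^ 3 * z ∂gaussianReal 0 1
      = gaussianRealPolyMean 0 1 (X * hermite n ^ 3) := by
        simp [gaussianRealPolyMean_apply, He, mul_comm]
    _ = gaussianRealPolyMean 0 1 (derivative (hermite n ^ 3)) := by
        simp [gaussianRealPolyMean_X_mul]
    _ = 3 * n * hermiteTriple (n - 1) n n := by
        rw [h, gaussianRealPolyMean_natCast_mul, Nat.cast_mul, Nat.cast_ofNat]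
        rfl

/-- For every `k`, `E[(He_{2k+1}(z))³ · z] ≠ 0` where `z ∼ N(0,1)`. -/
theorem odd_hermite_cube_correlation_ne_zero (k : ℕ) :
    ∫ z, (He (2 * k + 1) z) ^ 3 * z ∂(gaussianReal 0 1) ≠ 0 := by
  have h : 0 < hermiteTriple (2 * k) (2 * k + 1) (2 * k + 1) := by
    convert hermiteTriple_pos (k + 1) k k using 2 <;> ring
  rw [integral_He_pow_three_mul, Nat.add_sub_cancel]
  positivity
end

section
/- Let g be a real polynomial that is not identically zero, is odd (g(−x) = −g(x) for all x), and has all coefficients nonnegative. Then for every odd positive integer k, E[(g(z))^k · z] > 0, where z is a standard normal random variable. -/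
open MeasureTheory ProbabilityTheory

lemma integrable_pow_gaussian (n : ℕ) :
    Integrable (fun x : ℝ => x ^ n) (gaussianReal 0 1) := by
  rw [gaussianReal_of_var_ne_zero 0 one_ne_zero,
    integrable_withDensity_iff (measurable_gaussianPDF 0 1)
      (ae_of_all _ fun x => ENNReal.ofReal_lt_top)]
  have key : Integrable (fun x : ℝ => x ^ n * Real.exp (-(1/2 : ℝ) * x ^ 2)) := by
    simpa [Real.rpow_natCast] using
      integrable_rpow_mul_exp_neg_mul_sq one_half_pos
        (neg_one_lt_zero.trans_le (Nat.cast_nonneg n) : (-1:ℝ) < (n:ℝ))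
  refine (key.abs.const_mul ((Real.sqrt (2 * Real.pi))⁻¹)).mono' ?_ (ae_of_all _ fun x => ?_)
  · exact ((measurable_id.pow_const n).mul
      ((measurable_gaussianPDF 0 1).ennreal_toReal)).aestronglyMeasurable
  · have hc : (0:ℝ) ≤ (Real.sqrt (2 * Real.pi))⁻¹ := by positivity
    simp only [gaussianPDF, gaussianPDFReal, NNReal.coe_one, mul_one, sub_zero]
    rw [Real.norm_eq_abs, ENNReal.toReal_ofReal (by positivity),
      show x ^ n * ((Real.sqrt (2 * Real.pi))⁻¹ * Real.exp (-x ^ 2 / 2))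
        = (Real.sqrt (2 * Real.pi))⁻¹ * (x ^ n * Real.exp (-x ^ 2 / 2)) by ring,
      abs_mul, abs_of_nonneg hc,
      show -x ^ 2 / 2 = -(1/2 : ℝ) * x ^ 2 by ring]

lemma integrable_polyeval_gaussian (p : Polynomial ℝ) :
    Integrable (fun x : ℝ => p.eval x) (gaussianReal 0 1) := by
  have : (fun x : ℝ => p.eval x)
      = fun x => ∑ i ∈ Finset.range (p.natDegree + 1), p.coeff i * x ^ i := by
    funext x
    exact p.eval_eq_sum_range x
  rw [this]
  exact integrable_finset_sum _ fun i _ => (integrable_pow_gaussian i).const_mul _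

/-- For an odd real polynomial `g ≠ 0` with nonnegative coefficients and any odd positive
integer `k`, the Gaussian expectation `E[(g(z))ᵏ · z]` is strictly positive. -/
theorem odd_nonneg_poly_power_correlation_pos
    (g : Polynomial ℝ) (hg0 : g ≠ 0)
    (hodd : ∀ x : ℝ, g.eval (-x) = -(g.eval x))
    (hcoeff : ∀ n : ℕ, 0 ≤ g.coeff n)
    (k : ℕ) (hk : 0 < k) (hkodd : Odd k) :
    0 < ∫ z, (g.eval z) ^ k * z ∂(gaussianReal 0 1) := by
  set q : Polynomial ℝ := g ^ k * Polynomial.X with hq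
  have hqeval : ∀ x : ℝ, q.eval x = (g.eval x) ^ k * x := by
    intro x; simp [hq]
  have hq0 : q ≠ 0 := mul_ne_zero (pow_ne_zero k hg0) Polynomial.X_ne_zero
  have hgpos : ∀ x : ℝ, 0 ≤ x → 0 ≤ g.eval x := by
    intro x hx
    rw [g.eval_eq_sum_range]
    exact Finset.sum_nonneg fun i _ => mul_nonneg (hcoeff i) (pow_nonneg hx i)
  have hnonneg : ∀ x : ℝ, 0 ≤ (g.eval x) ^ k * x := by
    intro x
    rcases le_total 0 x with hx | hx
    · exact mul_nonneg (pow_nonneg (hgpos x hx) k) hx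
    · have h1 : g.eval x ≤ 0 := by
        have := hodd (-x)
        rw [neg_neg] at this
        have h2 : 0 ≤ g.eval (-x) := hgpos _ (neg_nonneg.2 hx)
        linarith [hodd x]
      have h3 := mul_nonneg (neg_nonneg.2 (hkodd.pow_nonpos h1)) (neg_nonneg.2 hx)
      simpa using h3
  have hint : Integrable (fun z : ℝ => (g.eval z) ^ k * z) (gaussianReal 0 1) := by
    have := integrable_polyeval_gaussian q
    simpa [hqeval] using this
  rw [integral_pos_iff_support_of_nonneg hnonneg hint]
  set f : ℝ → ℝ := fun z => (g.eval z) ^ k * z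
  have hsub : (Function.support f)ᶜ ⊆ (q.roots.toFinset : Set ℝ) := by
    intro x hx
    simp only [Function.mem_support, not_not, Set.mem_compl_iff] at hx
    exact Finset.mem_coe.2 <| Multiset.mem_toFinset.2 ((Polynomial.mem_roots hq0).2 (by rw [Polynomial.IsRoot, hqeval]; exact hx))
  have hroots0 : (gaussianReal 0 1) (q.roots.toFinset : Set ℝ) = 0 :=
    (gaussianReal_absolutelyContinuous 0 one_ne_zero)
      ((q.roots.toFinset : Set ℝ).toFinite.measure_zero _)
  have hcompl0 : (gaussianReal 0 1) (Function.support f)ᶜ = 0 :=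
    measure_mono_null hsub hroots0
  rw [pos_iff_ne_zero]
  intro h0
  have h1 := measure_union_le (μ := gaussianReal 0 1) (Function.support f) (Function.support f)ᶜ
  rw [Set.union_compl_self, measure_univ, h0, hcompl0] at h1
  simp at h1
end

section
/- Let z = (z₁, z₂, z₃) have i.i.d. standard normal coordinates. Then for every measurable F : ℝ → ℝ such that z ↦ F(z₁z₂z₃)·z₁ is integrable with respect to the standard Gaussian measure on ℝ³, E[F(z₁z₂z₃) · z₁] = 0; moreover E[F(z₁z₂z₃) · (z₁ + z₂ + z₃)] = 0 under the analogous integrability assumption. -/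
open MeasureTheory ProbabilityTheory

/-- The standard Gaussian measure on `ℝ³` (i.i.d. `N(0,1)` coordinates). -/
noncomputable def stdGaussian3 : Measure (Fin 3 → ℝ) :=
  Measure.pi fun _ => gaussianReal 0 1

lemma sign_flip_mp (ε : Fin 3 → ℝ) (hε : ∀ k, ε k = 1 ∨ ε k = -1) :
    MeasurePreserving (fun z k => ε k * z k) stdGaussian3 stdGaussian3 := by
  refine measurePreserving_pi _ _ (fun k => ⟨(measurable_id.const_mul (ε k)), ?_⟩)
  rw [gaussianReal_map_const_mul]
  rcases hε k with h | h <;> rw [h] <;> norm_num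

lemma flip_integral (ε : Fin 3 → ℝ) (hε : ∀ k, ε k = 1 ∨ ε k = -1)
    (f : (Fin 3 → ℝ) → ℝ) (hf : AEStronglyMeasurable f stdGaussian3) :
    ∫ z, f (fun k => ε k * z k) ∂stdGaussian3 = ∫ z, f z ∂stdGaussian3 := by
  have hT := sign_flip_mp ε hε
  rw [← hT.map_eq] at hf
  rw [← MeasureTheory.integral_map hT.measurable.aemeasurable hf, hT.map_eq]

lemma flip_integrable (ε : Fin 3 → ℝ) (hε : ∀ k, ε k = 1 ∨ ε k = -1)
    (f : (Fin 3 → ℝ) → ℝ) (hf0 : AEStronglyMeasurable f stdGaussian3)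
    (hf : Integrable f stdGaussian3) :
    Integrable (fun z => f (fun k => ε k * z k)) stdGaussian3 :=
  ((sign_flip_mp ε hε).integrable_comp hf0).mpr hf

/-- For the target `f(z) = z₁z₂z₃`, no output transformation correlates linearly with `e₁`,
nor with `e₁ + e₂ + e₃`. -/
theorem prod_target_directions_are_hard :
    (∀ F : ℝ → ℝ, Measurable F →
      Integrable (fun z => F (z 0 * z 1 * z 2) * z 0) stdGaussian3 →
      ∫ z, F (z 0 * z 1 * z 2) * z 0 ∂stdGaussian3 = 0) ∧
    (∀ F : ℝ → ℝ, Measurable F →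
      Integrable (fun z => F (z 0 * z 1 * z 2) * (z 0 + z 1 + z 2)) stdGaussian3 →
      ∫ z, F (z 0 * z 1 * z 2) * (z 0 + z 1 + z 2) ∂stdGaussian3 = 0) := by
  have hmp : ∀ F : ℝ → ℝ, Measurable F →
      Measurable (fun z : Fin 3 → ℝ => F (z 0 * z 1 * z 2)) := fun F hF => by
    exact hF.comp (((measurable_pi_apply 0).mul (measurable_pi_apply 1)).mul
      (measurable_pi_apply 2))
  constructor
  · intro F hF hInt
    set f : (Fin 3 → ℝ) → ℝ := fun z => F (z 0 * z 1 * z 2) * z 0 with hfdef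
    have hfm : AEStronglyMeasurable f stdGaussian3 :=
      ((hmp F hF).mul (measurable_pi_apply 0)).aestronglyMeasurable
    have key := flip_integral ![-1, -1, 1] (fun k => by fin_cases k <;> norm_num) f hfm
    have hco : (fun z : Fin 3 → ℝ => f (fun k => ![-1, -1, 1] k * z k)) =
        fun z => -(f z) := by
      funext z
      simp only [hfdef, Fin.isValue, Matrix.cons_val_zero, Matrix.cons_val_one,
        Matrix.head_cons, Matrix.cons_val_two, Matrix.tail_cons]
      rw [show (-1 : ℝ) * z 0 * (-1 * z 1) * (1 * z 2) = z 0 * z 1 * z 2 by ring]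
      ring
    rw [hco, integral_neg] at key
    linarith
  · intro F hF hInt
    set f : (Fin 3 → ℝ) → ℝ := fun z => F (z 0 * z 1 * z 2) * (z 0 + z 1 + z 2) with hfdef
    have hfm : AEStronglyMeasurable f stdGaussian3 :=
      ((hmp F hF).mul (((measurable_pi_apply 0).add (measurable_pi_apply 1)).add
        (measurable_pi_apply 2))).aestronglyMeasurable
    set I := ∫ z, f z ∂stdGaussian3 with hI
    -- for each pair of flipped signs, get a flipped function with integral I
    have step : ∀ ε : Fin 3 → ℝ, (∀ k, ε k = 1 ∨ ε k = -1) →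
        (Integrable (fun z => f (fun k => ε k * z k)) stdGaussian3 ∧
         ∫ z, f (fun k => ε k * z k) ∂stdGaussian3 = I) :=
      fun ε hε => ⟨flip_integrable ε hε f hfm hInt, flip_integral ε hε f hfm⟩
    obtain ⟨hi01, he01⟩ := step ![-1, -1, 1] (fun k => by fin_cases k <;> norm_num)
    obtain ⟨hi12, he12⟩ := step ![1, -1, -1] (fun k => by fin_cases k <;> norm_num)
    obtain ⟨hi02, he02⟩ := step ![-1, 1, -1] (fun k => by fin_cases k <;> norm_num)
    have hc01 : (fun z : Fin 3 → ℝ => f (fun k => ![-1, -1, 1] k * z k)) =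
        fun z => F (z 0 * z 1 * z 2) * (-(z 0) - z 1 + z 2) := by
      funext z
      simp only [hfdef, Fin.isValue, Matrix.cons_val_zero, Matrix.cons_val_one,
        Matrix.head_cons, Matrix.cons_val_two, Matrix.tail_cons]
      rw [show (-1 : ℝ) * z 0 * (-1 * z 1) * (1 * z 2) = z 0 * z 1 * z 2 by ring]
      ring
    have hc12 : (fun z : Fin 3 → ℝ => f (fun k => ![1, -1, -1] k * z k)) =
        fun z => F (z 0 * z 1 * z 2) * (z 0 - z 1 - z 2) := by
      funext z
      simp only [hfdef, Fin.isValue, Matrix.cons_val_zero, Matrix.cons_val_one,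
        Matrix.head_cons, Matrix.cons_val_two, Matrix.tail_cons]
      rw [show (1 : ℝ) * z 0 * (-1 * z 1) * (-1 * z 2) = z 0 * z 1 * z 2 by ring]
      ring
    have hc02 : (fun z : Fin 3 → ℝ => f (fun k => ![-1, 1, -1] k * z k)) =
        fun z => F (z 0 * z 1 * z 2) * (-(z 0) + z 1 - z 2) := by
      funext z
      simp only [hfdef, Fin.isValue, Matrix.cons_val_zero, Matrix.cons_val_one,
        Matrix.head_cons, Matrix.cons_val_two, Matrix.tail_cons]
      rw [show (-1 : ℝ) * z 0 * (1 * z 1) * (-1 * z 2) = z 0 * z 1 * z 2 by ring]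
      ring
    rw [hc01] at hi01 he01
    rw [hc12] at hi12 he12
    rw [hc02] at hi02 he02
    -- sum of the three flipped functions equals -f
    have hsum : (fun z : Fin 3 → ℝ => F (z 0 * z 1 * z 2) * (-(z 0) - z 1 + z 2)
        + F (z 0 * z 1 * z 2) * (z 0 - z 1 - z 2)
        + F (z 0 * z 1 * z 2) * (-(z 0) + z 1 - z 2)) = fun z => -(f z) := by
      funext z; simp only [hfdef]; ring
    have hIsum : ∫ z, (F (z 0 * z 1 * z 2) * (-(z 0) - z 1 + z 2)
        + F (z 0 * z 1 * z 2) * (z 0 - z 1 - z 2)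
        + F (z 0 * z 1 * z 2) * (-(z 0) + z 1 - z 2)) ∂stdGaussian3 = I + I + I := by
      have h2 := integral_add (hi01.add hi12) hi02
      simp only [Pi.add_apply] at h2
      rw [h2, integral_add hi01 hi12, he01, he12, he02]
    have h3 : ∫ z, -(f z) ∂stdGaussian3 = I + I + I := hsum ▸ hIsum
    rw [integral_neg] at h3
    have : -I = I + I + I := h3
    linarith
end

section
/- Let d ≥ 2. Let O : ℝ^d → ℝ^d be a linear orthogonal map with O e₁ = e₁ and O² = id (an involutory orthogonal transformation fixing e₁). Let f₁ : ℝ^d → ℝ satisfy f₁(z) = f₁(z − z₁e₁) for all z (i.e., f₁ depends only on the component of z orthogonal to e₁), and let f₂ : ℝ → ℝ be odd (f₂(−x) = −f₂(x)). Define f(z) = (f₁(Oz) − f₁(z)) · f₂(z₁) and let R_{e₁} denote the reflection along e₁, R_{e₁}z = z − 2z₁e₁. Then f(O(R_{e₁} z)) = f(z) for all z ∈ ℝ^d. -/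
open MeasureTheory

/-- For `d = m + 2 ≥ 2`: if `O` is an involutory orthogonal map fixing `e₁`, `f₁` depends
only on the component orthogonal to `e₁`, and `f₂` is odd, then
`f(z) = (f₁(Oz) − f₁(z))·f₂(z₁)` satisfies `f(O(R_{e₁} z)) = f(z)` for all `z`,
where `R_{e₁} z = z − 2z₁e₁`. -/
theorem constructed_target_orthogonally_even_symmetric
    (m : ℕ)
    (O : EuclideanSpace ℝ (Fin (m + 2)) ≃ₗᵢ[ℝ] EuclideanSpace ℝ (Fin (m + 2)))
    (hOe : O (EuclideanSpace.single 0 1) = EuclideanSpace.single 0 1)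
    (hOinv : ∀ z, O (O z) = z)
    (f₁ : EuclideanSpace ℝ (Fin (m + 2)) → ℝ)
    (hf₁ : ∀ z : EuclideanSpace ℝ (Fin (m + 2)),
      f₁ z = f₁ (z - z 0 • EuclideanSpace.single 0 1))
    (f₂ : ℝ → ℝ) (hf₂ : ∀ x : ℝ, f₂ (-x) = -(f₂ x)) :
    ∀ z : EuclideanSpace ℝ (Fin (m + 2)),
      (fun w : EuclideanSpace ℝ (Fin (m + 2)) => (f₁ (O w) - f₁ w) * f₂ (w 0))
          (O ((fun w : EuclideanSpace ℝ (Fin (m + 2)) =>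
            w - (2 * w 0) • EuclideanSpace.single 0 1) z))
        = (fun w : EuclideanSpace ℝ (Fin (m + 2)) => (f₁ (O w) - f₁ w) * f₂ (w 0)) z := by
  intro z
  simp only
  -- O preserves the first coordinate
  have h0 : ∀ w : EuclideanSpace ℝ (Fin (m + 2)), (O w) 0 = w 0 := by
    intro w
    have h1 := O.inner_map_map (EuclideanSpace.single (0 : Fin (m + 2)) (1 : ℝ)) w
    rw [hOe] at h1
    simpa [EuclideanSpace.inner_single_left] using h1
  set e : EuclideanSpace ℝ (Fin (m + 2)) := EuclideanSpace.single 0 1 with he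
  -- f₁ only depends on the orthogonal part
  have hf : ∀ w w' : EuclideanSpace ℝ (Fin (m + 2)),
      w - w 0 • e = w' - w' 0 • e → f₁ w = f₁ w' := by
    intro w w' h
    rw [hf₁ w, hf₁ w', h]
  set Rz : EuclideanSpace ℝ (Fin (m + 2)) := z - (2 * z 0) • e with hRz
  have hRz0 : Rz 0 = - z 0 := by
    simp [hRz, he, PiLp.sub_apply, PiLp.smul_apply, EuclideanSpace.single_apply]
    ring
  have hORz : O Rz = O z - (2 * z 0) • e := by
    rw [hRz, map_sub, LinearIsometryEquiv.map_smul, hOe]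
  have hORz0 : (O Rz) 0 = - z 0 := by
    rw [hORz]
    have := h0 z
    simp [PiLp.sub_apply, PiLp.smul_apply, he, EuclideanSpace.single_apply, this]
    ring
  have hOORz : O (O Rz) = Rz := hOinv Rz
  have h1 : f₁ (O (O Rz)) = f₁ z := by
    rw [hOORz]
    apply hf
    rw [hRz0, hRz]
    module
  have h2 : f₁ (O Rz) = f₁ (O z) := by
    apply hf
    rw [hORz0, hORz, h0 z]
    module
  rw [h1, h2, hORz0, hf₂]
  ring
end
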